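/- Let H be a finite-dimensional Hopf algebra over a field k with nonzero left integral t, let A be a unital k-algebra with a symmetric partial action of H such that h·1_A is central, let ρ̄ : A → A ⊗ H* be the induced partial H*-comodule structure, and suppose the canonical map can : A ⊗_{A^{\underline{H}}} A → (A ⊗ H*)ρ̄(1_A), can(a ⊗ b) = (a ⊗ 1)ρ̄(b), is surjective. Then: (i) there exist a₁,…,aₙ and b₁,…,bₙ in A such that each map φᵢ : A → A^{\underline{H}}, φᵢ(a) = t·(bᵢa), is a right A^{\underline{H}}-module map and a = Σᵢ aᵢ φᵢ(a) for every a ∈ A; consequently A is a finitely generated projective right A^{\underline{H}}-module; (ii) the map can is bijective. -/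

import Mathlib

open TensorProduct

/-- A partial action of a Hopf algebra `H` on a unital `k`-algebra `A`:
a linear map `act : H →ₗ[k] A →ₗ[k] A`, `h ⊗ a ↦ h · a`, such that
(i) `h·(ab) = Σ (h₁·a)(h₂·b)`, (ii) `1·a = a`, and
(iii) `h·(g·a) = Σ (h₁·1)((h₂ g)·a)`. -/
structure PartialAction (k H A : Type*) [CommSemiring k] [Semiring H] [HopfAlgebra k H]
    [Semiring A] [Algebra k A] where
  act : H →ₗ[k] A →ₗ[k] A
  one_act : ∀ a : A, act 1 a = a
  act_mul : ∀ (h : H) (a b : A),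
    act h (a * b) = LinearMap.mul' k A
      (TensorProduct.map (act.flip a) (act.flip b) (Coalgebra.comul h))
  act_act : ∀ (h g : H) (a : A),
    act h (act g a) = LinearMap.mul' k A
      (TensorProduct.map (act.flip 1) ((act.flip a) ∘ₗ LinearMap.mulRight k g)
        (Coalgebra.comul h))

variable {k H A : Type*} [Field k] [Ring H] [HopfAlgebra k H] [Ring A] [Algebra k A]

/-- The induced partial `H*`-comodule structure `ρ(a) = Σᵢ (hᵢ·a) ⊗ hᵢ*` on `A`,
for a basis `{hᵢ}` of `H` with dual basis `{hᵢ*}`. -/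
noncomputable def inducedCoaction (α : PartialAction k H A) {ι : Type*} [Fintype ι]
    (bH : Module.Basis ι k H) : A →ₗ[k] A ⊗[k] (Module.Dual k H) :=
  ∑ i : ι, ((TensorProduct.mk k A (Module.Dual k H)).flip (bH.coord i)) ∘ₗ (α.act (bH i))

/-- The canonical map `can : A ⊗ A → A ⊗ H*`, `a ⊗ b ↦ (a ⊗ 1)ρ(b) = Σ a b⁽⁰⁾ ⊗ b⁽¹⁾`. -/
noncomputable def canMap (α : PartialAction k H A) {ι : Type*} [Fintype ι]
    (bH : Module.Basis ι k H) : (A ⊗[k] A) →ₗ[k] A ⊗[k] (Module.Dual k H) :=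
  (TensorProduct.map (LinearMap.mul' k A) LinearMap.id) ∘ₗ
    (TensorProduct.assoc k A A (Module.Dual k H)).symm.toLinearMap ∘ₗ
    (TensorProduct.map LinearMap.id (inducedCoaction α bH))

/-- The convolution product on `H* = Module.Dual k H`: `(f * g)(h) = Σ f(h₁)g(h₂)`. -/
noncomputable def conv (f g : Module.Dual k H) : Module.Dual k H :=
  (LinearMap.mul' k k) ∘ₗ (TensorProduct.map f g) ∘ₗ Coalgebra.comul

/-- Generators of `(A ⊗ H*)ρ(1)`, the codomain of the canonical map:
the elements `(a ⊗ f)·ρ(1) = Σᵢ (a(hᵢ·1)) ⊗ f·hᵢ*`. -/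
noncomputable def galoisTarget (α : PartialAction k H A) {ι : Type*} [Fintype ι]
    (bH : Module.Basis ι k H) : Set (A ⊗[k] (Module.Dual k H)) :=
  {y | ∃ (a : A) (f : Module.Dual k H),
    y = ∑ i : ι, (a * α.act (bH i) 1) ⊗ₜ[k] conv f (bH.coord i)}

/-- The kernel of the projection `A ⊗_k A → A ⊗_{A^{\underline{H}}} A`:
the span of the elements `ac ⊗ b - a ⊗ cb` with `c ∈ A^{\underline{H}}`. -/
noncomputable def balancedRel (α : PartialAction k H A) : Submodule k (A ⊗[k] A) :=
  Submodule.span k {x : A ⊗[k] A | ∃ a b c : A,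
    (∀ h : H, α.act h c = c * α.act h 1) ∧ x = (a * c) ⊗ₜ[k] b - a ⊗ₜ[k] (c * b)}

/-!
A nonzero left integral `t` yields `f ∈ H*` with `Σ f(t₁) t₂ = 1`: the right legs of `Δ t` span a
left ideal (because `(1 ⊗ h) Δ t = (S h ⊗ 1) Δ t`) which is stable under `Δ` in the second factor,
so it contains `Σ S(c₁) c₂ = ε(c) 1` for an element `c` of it with `ε(c) = 1`.

Surjectivity of `can` applied to `(1 ⊗ f) ρ(1)` gives `aⱼ, bⱼ` with
`Σ aⱼ (h·bⱼ) = Σ f(h₁) (h₂·1)` for all `h`, and then by coassociativity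
`Σ aⱼ t·(bⱼ x) = Σ f(t₁) (t₂·1)(t₃·x) = Σ f(t₁) t₂·x = x`. Symmetry of the action and
`h t = ε(h) t` make every `t·z` invariant, and centrality of the `h·1` makes `z ↦ t·z` right
`A^{\underline{H}}`-linear. For injectivity, `can(Σ xₚ ⊗ yₚ) = 0` means `Σ xₚ (h·yₚ) = 0` for
all `h`; the identity `(g·x) y = Σ g₁·(x (S(g₂)·y))` turns this into `Σₚ t·(bⱼ xₚ) yₚ = 0`, so
`Σ xₚ ⊗ yₚ = Σ aⱼ t·(bⱼ xₚ) ⊗ yₚ` is balanced-equivalent to `Σ aⱼ ⊗ t·(bⱼ xₚ) yₚ = 0`.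
-/

open Coalgebra (comul counit)
open scoped RingTheory.LinearMap Coalgebra

namespace Coalgebra.Repr

variable {R C ι : Type*} {κ Λ : ι → Type*} [CommSemiring R] [AddCommMonoid C] [Module R C]
  [Coalgebra R C] {c : C}

theorem lid_map_comul {M : Type*} [AddCommMonoid M] [Module R M] (𝓡 : Repr R c ι)
    (f : C →ₗ[R] R) (g : C →ₗ[R] M) :
    _root_.TensorProduct.lid R M ((f ⊗ₘ g) (comul c)) =
      ∑ i ∈ 𝓡.index, f (𝓡.left i) • g (𝓡.right i) := by
  simp [← 𝓡.eq, map_sum]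

theorem sum_counit_smul_right (𝓡 : Repr R c ι) :
    ∑ i ∈ 𝓡.index, counit (R := R) (𝓡.right i) • 𝓡.left i = c := by
  simpa only [map_sum, rid_tmul, one_smul] using
    congr((_root_.TensorProduct.rid R C) $(sum_tmul_counit_eq 𝓡))

variable {E : Type*} [Semiring E] [Algebra R E]

theorem mul'_map_comul (𝓡 : Repr R c ι) (f g : C →ₗ[R] E) :
    LinearMap.mul' R E ((f ⊗ₘ g) (comul c)) = ∑ i ∈ 𝓡.index, f (𝓡.left i) * g (𝓡.right i) := by
  simp [← 𝓡.eq, map_sum]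

theorem sum_sum_mul_coassoc (𝓡 : Repr R c ι) (𝓡₁ : ∀ i, Repr R (𝓡.left i) (κ i))
    (𝓡₂ : ∀ i, Repr R (𝓡.right i) (Λ i)) (P : C →ₗ[R] E) (B : C →ₗ[R] C →ₗ[R] E) :
    ∑ i ∈ 𝓡.index, ∑ j ∈ (𝓡₁ i).index, P ((𝓡₁ i).left j) * B ((𝓡₁ i).right j) (𝓡.right i) =
      ∑ i ∈ 𝓡.index, ∑ j ∈ (𝓡₂ i).index, P (𝓡.left i) * B ((𝓡₂ i).left j) ((𝓡₂ i).right j) := by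
  simpa [map_sum] using congr(LinearMap.mul' R E ((P ⊗ₘ lift B) $(sum_tmul_tmul_eq 𝓡 𝓡₁ 𝓡₂)))

noncomputable def ofBasis [Fintype ι] (b : Module.Basis ι R C) (c : C) : Repr R c ι where
  index := Finset.univ
  left := b
  right i := _root_.TensorProduct.lid R C ((b.coord i ⊗ₘ LinearMap.id) (comul c))
  eq := by
    induction comul (R := R) c using TensorProduct.induction_on with
    | zero => simp
    | tmul u v =>
      simp only [map_tmul, Module.Basis.coord_apply, LinearMap.id_coe, id_eq, lid_tmul,
        ← smul_tmul, ← sum_tmul, b.sum_repr]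
    | add x y hx hy => simp [tmul_add, Finset.sum_add_distrib, hx, hy]

@[simp]
theorem ofBasis_index [Fintype ι] (b : Module.Basis ι R C) : (ofBasis b c).index = .univ :=
  rfl

@[simp]
theorem ofBasis_left [Fintype ι] (b : Module.Basis ι R C) : (ofBasis b c).left = b :=
  rfl

end Coalgebra.Repr

theorem HopfAlgebra.sum_antipode_tmul_one_mul_comul {R H ι : Type*} [CommSemiring R] [Semiring H]
    [HopfAlgebra R H] {h : H} (𝓡 : Coalgebra.Repr R h ι) :
    ∑ i ∈ 𝓡.index, (antipode R (𝓡.left i) ⊗ₜ[R] (1 : H)) * comul (𝓡.right i) = 1 ⊗ₜ h := by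
  let P : H →ₗ[R] H ⊗[R] H := (TensorProduct.mk R H H).flip 1 ∘ₗ antipode R
  calc _ = ∑ i ∈ 𝓡.index, ∑ j ∈ (ℛ R (𝓡.right i)).index,
        P (𝓡.left i) * (ℛ R (𝓡.right i)).left j ⊗ₜ (ℛ R (𝓡.right i)).right j := by
        simp [P, ← (ℛ R _).eq, Finset.mul_sum]
    _ = ∑ i ∈ 𝓡.index, ∑ j ∈ (ℛ R (𝓡.left i)).index,
        P ((ℛ R (𝓡.left i)).left j) * (ℛ R (𝓡.left i)).right j ⊗ₜ 𝓡.right i :=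
      (𝓡.sum_sum_mul_coassoc _ _ P (TensorProduct.mk R H H)).symm
    _ = 1 ⊗ₜ h := by
      simp only [P, LinearMap.comp_apply, LinearMap.flip_apply, mk_apply,
        Algebra.TensorProduct.tmul_mul_tmul, one_mul, ← sum_tmul, sum_antipode_mul_eq_smul]
      simp_rw [smul_tmul, ← tmul_sum, Coalgebra.sum_counit_smul]

def IsLeftIntegral (R : Type*) {H : Type*} [CommSemiring R] [Semiring H] [Bialgebra R H]
    (t : H) : Prop :=
  ∀ h : H, h * t = counit (R := R) h • t

namespace IsLeftIntegral

section HopfAlgebra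

variable {R H : Type*} [CommSemiring R] [Semiring H] [HopfAlgebra R H] {t : H}

theorem one_tmul_mul_comul (ht : IsLeftIntegral R t) (h : H) :
    ((1 : H) ⊗ₜ[R] h) * comul t = (HopfAlgebra.antipode R h ⊗ₜ 1) * comul t := by
  let 𝓡 := ℛ R h
  calc ((1 : H) ⊗ₜ[R] h) * comul t
      = ∑ i ∈ 𝓡.index,
          (HopfAlgebra.antipode R (𝓡.left i) ⊗ₜ[R] (1 : H)) * comul (𝓡.right i * t) := by
        simp only [← HopfAlgebra.sum_antipode_tmul_one_mul_comul 𝓡, Finset.sum_mul, mul_assoc,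
          Bialgebra.comul_mul]
    _ = (∑ i ∈ 𝓡.index, counit (R := R) (𝓡.right i) •
          (HopfAlgebra.antipode R (𝓡.left i) ⊗ₜ[R] (1 : H))) * comul t := by
        simp only [ht _, map_smul, mul_smul_comm, ← smul_mul_assoc, Finset.sum_mul]
    _ = (HopfAlgebra.antipode R h ⊗ₜ 1) * comul t := by
        simp only [smul_tmul', ← map_smul, ← sum_tmul, ← map_sum, 𝓡.sum_counit_smul_right]

variable {ι : Type*} [Fintype ι] (b : Module.Basis ι R H)

theorem mul_mem_span_ofBasis_right (ht : IsLeftIntegral R t) (h : H) (j : ι) :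
    h * (Coalgebra.Repr.ofBasis b t).right j ∈
      Submodule.span R (Set.range (Coalgebra.Repr.ofBasis b t).right) := by
  classical
  let 𝓡 := Coalgebra.Repr.ofBasis b t
  have := congr(TensorProduct.lid R H ((b.coord j ⊗ₘ LinearMap.id) $(ht.one_tmul_mul_comul h)))
  simp only [← 𝓡.eq, Finset.mul_sum, Algebra.TensorProduct.tmul_mul_tmul, map_sum, map_tmul,
    lid_tmul, one_mul, LinearMap.id_coe, id_eq, 𝓡, Coalgebra.Repr.ofBasis_index,
    Coalgebra.Repr.ofBasis_left, Module.Basis.coord_apply, b.repr_self, Finsupp.single_apply,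
    ite_smul, one_smul, zero_smul, Finset.sum_ite_eq', Finset.mem_univ, if_true] at this
  rw [this]
  exact Submodule.sum_mem _ fun i _ => Submodule.smul_mem _ _ (Submodule.subset_span ⟨i, rfl⟩)

end HopfAlgebra

variable {t : H}

theorem one_mem_span_ofBasis_right (ht : IsLeftIntegral k t) (ht0 : t ≠ 0) {ι : Type*}
    [Fintype ι] (b : Module.Basis ι k H) :
    (1 : H) ∈ Submodule.span k (Set.range (Coalgebra.Repr.ofBasis b t).right) := by
  let 𝓡 := Coalgebra.Repr.ofBasis b t
  obtain ⟨f₀, hf₀⟩ := Module.Projective.exists_dual_eq_one k ht0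
  let P := Algebra.linearMap k H ∘ₗ f₀
  let B := LinearMap.mul k H ∘ₗ HopfAlgebra.antipode k
  -- `1 = ε(c) 1 = Σ S(c₁) c₂` for `c = Σ f₀(t₁) t₂`, and `ε(c) = f₀(t) = 1`
  have hone : (1 : H) = ∑ i ∈ 𝓡.index, ∑ j ∈ (ℛ k (𝓡.left i)).index,
      P ((ℛ k (𝓡.left i)).left j) * B ((ℛ k (𝓡.left i)).right j) (𝓡.right i) := by
    rw [𝓡.sum_sum_mul_coassoc _ (fun i => ℛ k (𝓡.right i))]
    simp only [P, B, LinearMap.comp_apply, LinearMap.mul_apply', Algebra.linearMap_apply,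
      ← Finset.mul_sum, HopfAlgebra.sum_antipode_mul_eq_smul, Algebra.algebraMap_eq_smul_one,
      smul_mul_smul_comm, mul_one, ← Finset.sum_smul]
    rw [← 𝓡.sum_counit_smul_right, map_sum] at hf₀
    simp only [map_smul, smul_eq_mul] at hf₀
    simp only [mul_comm (f₀ _), hf₀, one_smul]
  rw [hone]
  refine Submodule.sum_mem _ fun i _ => ?_
  simp only [P, B, LinearMap.comp_apply, LinearMap.mul_apply', ← mul_assoc, ← Finset.sum_mul]
  exact ht.mul_mem_span_ofBasis_right b _ i

theorem exists_lid_map_comul_eq_one [FiniteDimensional k H] (ht : IsLeftIntegral k t)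
    (ht0 : t ≠ 0) :
    ∃ f : Module.Dual k H, TensorProduct.lid k H ((f ⊗ₘ LinearMap.id) (comul t)) = 1 := by
  let b := Module.Free.chooseBasis k H
  obtain ⟨c, hc⟩ :=
    (Submodule.mem_span_range_iff_exists_fun k).1 (ht.one_mem_span_ofBasis_right ht0 b)
  refine ⟨b.constr k c, ?_⟩
  simp [(Coalgebra.Repr.ofBasis b t).lid_map_comul, b.constr_basis, hc]

end IsLeftIntegral

section TensorDual

variable {R V M : Type*} [CommSemiring R] [AddCommMonoid V] [Module R V] [AddCommMonoid M]
  [Module R M]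

theorem TensorProduct.exists_fin_sum_tmul (x : M ⊗[R] V) :
    ∃ (n : ℕ) (m : Fin n → M) (v : Fin n → V), x = ∑ j, m j ⊗ₜ v j := by
  induction x using TensorProduct.induction_on with
  | zero => exact ⟨0, finZeroElim, finZeroElim, by simp⟩
  | tmul m v => exact ⟨1, fun _ => m, fun _ => v, by simp⟩
  | add x y hx hy =>
    obtain ⟨n, m, v, rfl⟩ := hx
    obtain ⟨l, m', v', rfl⟩ := hy
    exact ⟨n + l, Fin.append m m', Fin.append v v', by simp [Fin.sum_univ_add]⟩

noncomputable def tensorDualHom : M ⊗[R] Module.Dual R V →ₗ[R] V →ₗ[R] M :=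
  dualTensorHom R V M ∘ₗ (TensorProduct.comm R M (Module.Dual R V)).toLinearMap

@[simp]
theorem tensorDualHom_tmul (m : M) (f : Module.Dual R V) (v : V) :
    tensorDualHom (m ⊗ₜ f) v = f v • m :=
  rfl

theorem tensorDualHom_injective [Module.Finite R V] [Module.Projective R V] :
    Function.Injective (tensorDualHom : M ⊗[R] Module.Dual R V →ₗ[R] V →ₗ[R] M) :=
  dualTensorHom_bijective.1.comp (TensorProduct.comm R M (Module.Dual R V)).injective

end TensorDual

namespace PartialAction

variable (α : PartialAction k H A)

def IsSymmetric : Prop :=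
  ∀ (h g : H) (a : A), α.act h (α.act g a) =
    LinearMap.mul' k A ((α.act.flip a ∘ₗ LinearMap.mulRight k g ⊗ₘ α.act.flip 1) (comul h))

/-- `c ∈ A^{\underline{H}}`. -/
def IsInvariant (c : A) : Prop :=
  ∀ h : H, α.act h c = c * α.act h 1

variable {α} {ι : Type*} {h : H}

theorem act_mul_eq_sum (𝓡 : Coalgebra.Repr k h ι) (a b : A) :
    α.act h (a * b) = ∑ i ∈ 𝓡.index, α.act (𝓡.left i) a * α.act (𝓡.right i) b := by
  rw [α.act_mul, 𝓡.mul'_map_comul]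
  rfl

theorem act_act_eq_sum (𝓡 : Coalgebra.Repr k h ι) (g : H) (a : A) :
    α.act h (α.act g a) = ∑ i ∈ 𝓡.index, α.act (𝓡.left i) 1 * α.act (𝓡.right i * g) a := by
  rw [α.act_act, 𝓡.mul'_map_comul]
  rfl

theorem act_eq_sum_act_one_mul (𝓡 : Coalgebra.Repr k h ι) (a : A) :
    α.act h a = ∑ i ∈ 𝓡.index, α.act (𝓡.left i) 1 * α.act (𝓡.right i) a := by
  simpa [α.one_act] using act_act_eq_sum (α := α) 𝓡 1 a

theorem IsSymmetric.act_act_eq_sum (hα : α.IsSymmetric) (𝓡 : Coalgebra.Repr k h ι) (g : H)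
    (a : A) :
    α.act h (α.act g a) = ∑ i ∈ 𝓡.index, α.act (𝓡.left i * g) a * α.act (𝓡.right i) 1 := by
  rw [hα, 𝓡.mul'_map_comul]
  rfl

theorem IsInvariant.act_invariant_mul {c : A} (hc : α.IsInvariant c) (h : H) (b : A) :
    α.act h (c * b) = c * α.act h b := by
  simp only [act_mul_eq_sum (ℛ k h), hc _, mul_assoc, ← Finset.mul_sum,
    ← act_eq_sum_act_one_mul]

theorem IsInvariant.act_mul_invariant (hcentral : ∀ (h : H) (a : A), α.act h 1 * a = a * α.act h 1)
    {c : A} (hc : α.IsInvariant c) (h : H) (b : A) : α.act h (b * c) = α.act h b * c := by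
  simp only [act_mul_eq_sum (ℛ k h), hc _, ← hcentral _ c, ← mul_assoc, ← Finset.sum_mul]
  rw [← act_mul_eq_sum, mul_one]

theorem IsSymmetric.isInvariant_act (hα : α.IsSymmetric) {t : H} (ht : IsLeftIntegral k t)
    (z : A) : α.IsInvariant (α.act t z) := by
  intro h
  conv_rhs => rw [← Coalgebra.sum_counit_smul (ℛ k h)]
  simp only [hα.act_act_eq_sum (ℛ k h), ht _, map_smul, map_sum, LinearMap.smul_apply,
    LinearMap.sum_apply, smul_mul_assoc, Finset.mul_sum, mul_smul_comm]

theorem sum_act_act_antipode (𝓡 : Coalgebra.Repr k h ι) (y : A) :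
    ∑ i ∈ 𝓡.index, α.act (𝓡.left i) (α.act (HopfAlgebra.antipode k (𝓡.right i)) y) =
      α.act h 1 * y := by
  have hcoassoc := 𝓡.sum_sum_mul_coassoc (fun i => ℛ k (𝓡.left i)) (fun i => ℛ k (𝓡.right i))
    (α.act.flip 1) (((LinearMap.mul k H).compl₂ (HopfAlgebra.antipode k)).compr₂ (α.act.flip y))
  simp only [LinearMap.flip_apply, LinearMap.compr₂_apply, LinearMap.compl₂_apply,
    LinearMap.mul_apply', ← Finset.mul_sum] at hcoassoc
  simp only [act_act_eq_sum (ℛ k _), hcoassoc, ← LinearMap.sum_apply, ← map_sum,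
    HopfAlgebra.sum_mul_antipode_eq_smul, map_smul, LinearMap.smul_apply, α.one_act,
    mul_smul_comm, ← smul_mul_assoc, ← Finset.sum_mul]
  conv_rhs => rw [← 𝓡.sum_counit_smul_right]
  simp only [map_sum, map_smul, LinearMap.sum_apply, LinearMap.smul_apply]

theorem act_mul_eq_sum_act (𝓡 : Coalgebra.Repr k h ι) (x y : A) :
    α.act h x * y =
      ∑ i ∈ 𝓡.index, α.act (𝓡.left i) (x * α.act (HopfAlgebra.antipode k (𝓡.right i)) y) := by
  have hcoassoc := 𝓡.sum_sum_mul_coassoc (fun i => ℛ k (𝓡.left i)) (fun i => ℛ k (𝓡.right i))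
    (α.act.flip x) (α.act.compl₂ (α.act.flip y ∘ₗ HopfAlgebra.antipode k))
  simp only [LinearMap.flip_apply, LinearMap.compl₂_apply, LinearMap.comp_apply,
    ← Finset.mul_sum, sum_act_act_antipode] at hcoassoc
  simp only [act_mul_eq_sum (ℛ k _), hcoassoc, ← mul_assoc, ← Finset.sum_mul]
  rw [← act_mul_eq_sum, mul_one]

theorem sum_act_mul_eq_zero {n : ℕ} {x y : Fin n → A}
    (hxy : ∀ h : H, ∑ j, x j * α.act h (y j) = 0) (g : H) : ∑ j, α.act g (x j) * y j = 0 := by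
  simp only [act_mul_eq_sum_act (ℛ k g), Finset.sum_comm (γ := Fin n), ← map_sum, hxy, map_zero,
    Finset.sum_const_zero]

theorem sum_mul_act_mul_eq_self {t : H} {f : Module.Dual k H}
    (hf : TensorProduct.lid k H ((f ⊗ₘ LinearMap.id) (comul t)) = 1) {n : ℕ} {a b : Fin n → A}
    (hab : ∀ h : H,
      ∑ j, a j * α.act h (b j) = TensorProduct.lid k A ((f ⊗ₘ α.act.flip 1) (comul h)))
    (x : A) : ∑ j, a j * α.act t (b j * x) = x := by
  let 𝓡 := ℛ k t
  have hcoassoc := 𝓡.sum_sum_mul_coassoc (fun i => ℛ k (𝓡.left i)) (fun i => ℛ k (𝓡.right i))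
    (Algebra.linearMap k A ∘ₗ f) ((LinearMap.mul k A).compl₁₂ (α.act.flip 1) (α.act.flip x))
  simp only [LinearMap.comp_apply, Algebra.linearMap_apply, LinearMap.compl₁₂_apply,
    LinearMap.mul_apply', LinearMap.flip_apply, Algebra.algebraMap_eq_smul_one, smul_mul_assoc,
    one_mul, ← mul_assoc, ← Finset.smul_sum, ← act_eq_sum_act_one_mul] at hcoassoc
  rw [𝓡.lid_map_comul] at hf
  simp only [LinearMap.id_apply] at hf
  calc ∑ j, a j * α.act t (b j * x)
      = ∑ i ∈ 𝓡.index, (∑ j, a j * α.act (𝓡.left i) (b j)) * α.act (𝓡.right i) x := by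
        simp only [act_mul_eq_sum 𝓡, Finset.mul_sum, Finset.sum_mul, mul_assoc]
        exact Finset.sum_comm
    _ = α.act (∑ i ∈ 𝓡.index, f (𝓡.left i) • 𝓡.right i) x := by
        simp only [hab, (ℛ k _).lid_map_comul, Finset.sum_mul, smul_mul_assoc, hcoassoc,
          map_sum, map_smul, LinearMap.sum_apply, LinearMap.smul_apply, LinearMap.flip_apply]
    _ = x := by rw [hf, α.one_act]

section CanonicalMap

variable [Fintype ι] (bH : Module.Basis ι k H)

theorem tensorDualHom_canMap_tmul (x y : A) (h : H) :
    tensorDualHom (canMap α bH (x ⊗ₜ y)) h = x * α.act h y := by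
  simp only [canMap, inducedCoaction, LinearMap.coe_comp, LinearEquiv.coe_coe,
    Function.comp_apply, map_tmul, LinearMap.id_coe, id_eq, LinearMap.coe_sum, Finset.sum_apply,
    LinearMap.flip_apply, mk_apply, tmul_sum, map_sum, assoc_symm_tmul, LinearMap.mul'_apply,
    tensorDualHom_tmul, Module.Basis.coord_apply]
  conv_rhs => rw [← bH.sum_repr h]
  simp only [map_sum, map_smul, LinearMap.sum_apply, LinearMap.smul_apply, Finset.mul_sum,
    mul_smul_comm]

theorem tensorDualHom_galoisTarget (a : A) (f : Module.Dual k H) (h : H) :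
    tensorDualHom (∑ i, (a * α.act (bH i) 1) ⊗ₜ conv f (bH.coord i)) h =
      a * TensorProduct.lid k A ((f ⊗ₘ α.act.flip 1) (comul h)) := by
  simp only [map_sum, LinearMap.sum_apply, tensorDualHom_tmul, conv, LinearMap.comp_apply,
    (ℛ k h).mul'_map_comul, (ℛ k h).lid_map_comul, Finset.sum_smul, Finset.mul_sum]
  rw [Finset.sum_comm]
  refine Finset.sum_congr rfl fun i _ => ?_
  conv_rhs => rw [← bH.sum_repr ((ℛ k h).right i)]
  simp only [LinearMap.flip_apply, map_sum, map_smul, Finset.smul_sum, Finset.mul_sum,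
    mul_smul_comm, smul_smul, Module.Basis.coord_apply]

variable {bH}

theorem balancedRel_le_ker_canMap [FiniteDimensional k H] :
    balancedRel α ≤ LinearMap.ker (canMap α bH) := by
  refine Submodule.span_le.2 ?_
  rintro _ ⟨a, b, c, hc, rfl⟩
  rw [SetLike.mem_coe, LinearMap.mem_ker, map_sub, sub_eq_zero]
  refine tensorDualHom_injective (LinearMap.ext fun h => ?_)
  simp only [tensorDualHom_canMap_tmul, IsInvariant.act_invariant_mul hc, mul_assoc]

theorem range_canMap_le [FiniteDimensional k H] :
    LinearMap.range (canMap α bH) ≤ Submodule.span k (galoisTarget α bH) := by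
  rintro _ ⟨w, rfl⟩
  induction w using TensorProduct.induction_on with
  | zero => simp
  | add w w' hw hw' => simpa using add_mem hw hw'
  | tmul x y =>
    have hcan : canMap α bH (x ⊗ₜ y) = ∑ i, ∑ j, ((x * α.act (bH i) y) * α.act (bH j) 1) ⊗ₜ
        conv (bH.coord i) (bH.coord j) := by
      refine tensorDualHom_injective (LinearMap.ext fun h => ?_)
      rw [map_sum, LinearMap.sum_apply, tensorDualHom_canMap_tmul]
      simp only [tensorDualHom_galoisTarget, (ℛ k h).lid_map_comul]
      conv_lhs => rw [← mul_one y, act_mul_eq_sum (ℛ k h)]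
      simp only [Finset.mul_sum, mul_assoc]
      rw [Finset.sum_comm]
      refine Finset.sum_congr rfl fun l _ => ?_
      conv_lhs => rw [← bH.sum_repr ((ℛ k h).left l)]
      simp only [map_sum, map_smul, LinearMap.sum_apply, LinearMap.smul_apply, Finset.mul_sum,
        Finset.sum_mul, smul_mul_assoc, mul_smul_comm, LinearMap.flip_apply,
        Module.Basis.coord_apply]
    rw [hcan]
    exact Submodule.sum_mem _ fun i _ => Submodule.subset_span ⟨_, _, rfl⟩

theorem exists_sum_mul_act_eq_of_surjective
    (hsurj : Submodule.span k (galoisTarget α bH) ≤ LinearMap.range (canMap α bH))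
    (f : Module.Dual k H) : ∃ (n : ℕ) (a b : Fin n → A), ∀ h : H,
      ∑ j, a j * α.act h (b j) = TensorProduct.lid k A ((f ⊗ₘ α.act.flip 1) (comul h)) := by
  obtain ⟨u, hu⟩ := hsurj (Submodule.subset_span ⟨1, f, rfl⟩)
  obtain ⟨n, a, b, rfl⟩ := TensorProduct.exists_fin_sum_tmul u
  refine ⟨n, a, b, fun h => ?_⟩
  have := congr(tensorDualHom $hu h)
  rw [tensorDualHom_galoisTarget, one_mul, map_sum, map_sum, LinearMap.sum_apply] at this
  simpa only [tensorDualHom_canMap_tmul] using this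

theorem ker_canMap_le (hα : α.IsSymmetric) {t : H} (ht : IsLeftIntegral k t) {n : ℕ}
    {a b : Fin n → A} (hab : ∀ x : A, ∑ j, a j * α.act t (b j * x) = x) :
    LinearMap.ker (canMap α bH) ≤ balancedRel α := by
  intro w hw
  obtain ⟨m, x, y, rfl⟩ := TensorProduct.exists_fin_sum_tmul w
  have hxy (h : H) : ∑ p, x p * α.act h (y p) = 0 := by
    simpa [tensorDualHom_canMap_tmul] using congr(tensorDualHom $hw h)
  have hzero (j : Fin n) : ∑ p, α.act t (b j * x p) * y p = 0 :=
    sum_act_mul_eq_zero (fun h => by simp only [mul_assoc, ← Finset.mul_sum, hxy, mul_zero]) t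
  have hbalanced : ∑ p, x p ⊗ₜ y p = ∑ p, ∑ j, ((a j * α.act t (b j * x p)) ⊗ₜ[k] y p -
      a j ⊗ₜ[k] (α.act t (b j * x p) * y p)) := by
    simp only [Finset.sum_sub_distrib, ← sum_tmul, hab]
    rw [Finset.sum_comm]
    simp only [← tmul_sum, hzero, tmul_zero, Finset.sum_const_zero, sub_zero]
  rw [hbalanced]
  exact Submodule.sum_mem _ fun p _ => Submodule.sum_mem _ fun j _ =>
    Submodule.subset_span ⟨_, _, _, hα.isInvariant_act ht _, rfl⟩

end CanonicalMap

end PartialAction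

/-- if `H` is finite-dimensional with nonzero left integral `t`, `A` carries
a symmetric partial action of `H` with each `h·1` central, and the canonical map
`can : A ⊗_{A^{\underline{H}}} A → (A ⊗ H*)ρ(1)` is surjective, then (i) there exist
`a₁,…,aₙ, b₁,…,bₙ ∈ A` such that each `φⱼ(x) = t·(bⱼx)` is a right
`A^{\underline{H}}`-module map into `A^{\underline{H}}` and `x = Σⱼ aⱼφⱼ(x)` — a dual
(projective) basis exhibiting `A` as a finitely generated projective right
`A^{\underline{H}}`-module — and (ii) `can` is bijective (i.e. its kernel on `A ⊗_k A`
is exactly the span of the `A^{\underline{H}}`-balancing relations, and its range is all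
of `(A ⊗ H*)ρ(1)`). -/
theorem canonical_map_surjective_implies_bijective
    [FiniteDimensional k H] (α : PartialAction k H A)
    (hsymm : ∀ (h g : H) (a : A),
      α.act h (α.act g a) = LinearMap.mul' k A
        (TensorProduct.map ((α.act.flip a) ∘ₗ LinearMap.mulRight k g) (α.act.flip 1)
          (Coalgebra.comul h)))
    (hcentral : ∀ (h : H) (a : A), (α.act h 1) * a = a * (α.act h 1))
    (t : H) (ht : t ≠ 0) (hint : ∀ h : H, h * t = (Coalgebra.counit (R := k) h) • t)
    {ι : Type*} [Fintype ι] (bH : Module.Basis ι k H)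
    -- the canonical map is surjective onto `(A ⊗ H*)ρ(1)`
    (hsurj : Submodule.span k (galoisTarget α bH) ≤ LinearMap.range (canMap α bH)) :
    -- (i) a finite projective (dual) basis for `A` over `A^{\underline{H}}`
    ((∃ (n : ℕ) (aa bb : Fin n → A),
      (∀ (j : Fin n) (x : A) (h : H),
        α.act h (α.act t (bb j * x)) = (α.act t (bb j * x)) * α.act h 1) ∧
      (∀ (j : Fin n) (x c : A), (∀ h : H, α.act h c = c * α.act h 1) →
        α.act t (bb j * (x * c)) = (α.act t (bb j * x)) * c) ∧
      (∀ x : A, x = ∑ j : Fin n, aa j * α.act t (bb j * x)))) ∧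
    -- (ii) `can` is bijective
    (LinearMap.ker (canMap α bH) = balancedRel α ∧
      LinearMap.range (canMap α bH) = Submodule.span k (galoisTarget α bH)) := by
  obtain ⟨f, hf⟩ := IsLeftIntegral.exists_lid_map_comul_eq_one hint ht
  obtain ⟨n, a, b, hab⟩ := PartialAction.exists_sum_mul_act_eq_of_surjective hsurj f
  have hdual := PartialAction.sum_mul_act_mul_eq_self hf hab
  refine ⟨⟨n, a, b, fun j x => PartialAction.IsSymmetric.isInvariant_act hsymm hint _,
    fun j x c hc => ?_, fun x => (hdual x).symm⟩,
    le_antisymm (PartialAction.ker_canMap_le hsymm hint hdual)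
      PartialAction.balancedRel_le_ker_canMap,
    le_antisymm PartialAction.range_canMap_le hsurj⟩
  rw [← mul_assoc]
  exact PartialAction.IsInvariant.act_mul_invariant hcentral hc _ _
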